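/- arXiv:2009.05826 — 7 statements merged into one kernel-verified Lean document; each statement's English description precedes it below -/
import Mathlib

section
/- Let q be a prime power, m ≥ 1, and let C be a linear code of length n and dimension k over F_{q^m}. Let S ⊆ F_{q^m} be an F_q-subspace of dimension λ ≤ m. Then dim_{F_q}(C|_S) ≥ km − n(m − λ). -/
open Module

/-- The subspace subcode of a code `C ⊆ F^n`, with respect to `K`-subspaces `S i ⊆ F`:
the `K`-linear code of codewords of `C` whose `i`-th entry lies in `S i` for every `i`. -/
def subspaceSubcode {K F : Type*} [Field K] [Field F] [Algebra K F] {n : ℕ}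
    (C : Submodule F (Fin n → F)) (S : Fin n → Submodule K F) :
    Submodule K (Fin n → F) :=
  C.restrictScalars K ⊓ Submodule.pi Set.univ S

/-! The subcode is the intersection of `C`, of `F_q`-dimension `km`, with `S_0 × ⋯ × S_{n-1}`,
of `F_q`-dimension `∑ λ_i`, inside `F_{q^m}^n`, of `F_q`-dimension `nm`; Grassmann's formula
`dim (A ∩ B) ≥ dim A + dim B - dim V` gives `km - ∑ (m - λ_i)`. -/

namespace Submodule

def piUnivEquiv {R ι : Type*} {φ : ι → Type*} [Semiring R] [∀ i, AddCommMonoid (φ i)]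
    [∀ i, Module R (φ i)] (p : ∀ i, Submodule R (φ i)) :
    pi Set.univ p ≃ₗ[R] ∀ i, p i where
  toFun x i := ⟨x.1 i, x.2 i (Set.mem_univ i)⟩
  map_add' _ _ := rfl
  map_smul' _ _ := rfl
  invFun y := ⟨fun i => y i, fun i _ => (y i).2⟩
  left_inv _ := rfl
  right_inv _ := rfl

theorem finrank_pi_univ {K ι : Type*} {φ : ι → Type*} [DivisionRing K] [Fintype ι]
    [∀ i, AddCommGroup (φ i)] [∀ i, Module K (φ i)] (p : ∀ i, Submodule K (φ i))
    [∀ i, FiniteDimensional K (p i)] :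
    finrank K (pi Set.univ p) = ∑ i, finrank K (p i) := by
  rw [(piUnivEquiv p).finrank_eq, finrank_pi_fintype]

theorem finrank_restrictScalars (K : Type*) {F V : Type*} [Field K] [Field F] [Algebra K F]
    [AddCommGroup V] [Module F V] [Module K V] [IsScalarTower K F V] (p : Submodule F V) :
    finrank K (p.restrictScalars K) = finrank K F * finrank F p := by
  rw [finrank_mul_finrank K F p]
  exact ((restrictScalarsEquiv K F V p).restrictScalars K).finrank_eq

theorem finrank_add_finrank_le_finrank_add_finrank_inf {K V : Type*} [DivisionRing K]
    [AddCommGroup V] [Module K V] [FiniteDimensional K V] (s t : Submodule K V) :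
    finrank K s + finrank K t ≤ finrank K V + finrank K (s ⊓ t : Submodule K V) := by
  rw [← finrank_sup_add_finrank_inf_eq]
  exact Nat.add_le_add_right (finrank_le _) _

end Submodule

theorem le_finrank_subspaceSubcode {K F : Type*} [Field K] [Field F] [Algebra K F]
    [FiniteDimensional K F] {n : ℕ} (C : Submodule F (Fin n → F)) (S : Fin n → Submodule K F) :
    (finrank K F * finrank F C : ℤ) - ∑ i, ((finrank K F : ℤ) - finrank K (S i)) ≤
      finrank K (subspaceSubcode C S) := by
  have hdim := Submodule.finrank_add_finrank_le_finrank_add_finrank_inf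
    (C.restrictScalars K) (Submodule.pi Set.univ S)
  rw [Submodule.finrank_restrictScalars, Submodule.finrank_pi_univ, finrank_pi_fintype] at hdim
  have hdimℤ : (finrank K F * finrank F C : ℤ) + ∑ i, (finrank K (S i) : ℤ) ≤
      ∑ _ : Fin n, (finrank K F : ℤ) + finrank K (subspaceSubcode C S) :=
    mod_cast hdim
  rw [Finset.sum_sub_distrib]
  linarith

theorem stmt_0_general {K F : Type*} [Field K] [Field F] [Algebra K F]
    [FiniteDimensional K F] {n k m lam : ℕ} (hm : finrank K F = m)
    (C : Submodule F (Fin n → F)) (hk : finrank F C = k)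
    (S : Submodule K F) (hlam : finrank K S = lam) :
    (k * m : ℤ) - n * ((m : ℤ) - lam) ≤
      (finrank K (subspaceSubcode C fun _ => S) : ℤ) := by
  have h := le_finrank_subspaceSubcode C fun _ => S
  simp only [hm, hk, hlam, Finset.sum_const, Finset.card_univ, Fintype.card_fin,
    nsmul_eq_mul] at h
  rwa [mul_comm (k : ℤ)]

/-- if `C` is an `[n,k]` code over `F_{q^m}` and `S` is a `λ`-dimensional
`F_q`-subspace of `F_{q^m}` with `λ ≤ m`, then `dim_{F_q} (C|_S) ≥ km - n(m - λ)`. -/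
theorem stmt_0 {K F : Type*} [Field K] [Fintype K] [Field F] [Algebra K F]
    [FiniteDimensional K F] {n k m lam : ℕ} (hm : finrank K F = m) (hm1 : 1 ≤ m)
    (C : Submodule F (Fin n → F)) (hk : finrank F C = k)
    (S : Submodule K F) (hlam : finrank K S = lam) (hlm : lam ≤ m) :
    (k * m : ℤ) - n * ((m : ℤ) - lam) ≤
      (finrank K (subspaceSubcode C fun _ => S) : ℤ) :=
  stmt_0_general hm C hk S hlam
end

section
/- Let q be a prime power, m ≥ 1, and let S_0, …, S_{n-1} be F_q-subspaces of F_{q^m}, each of dimension λ. Suppose km > n(m − λ). If R is chosen uniformly at random among the F_{q^m}-linear codes of length n and dimension k over F_{q^m}, then for any integer ℓ, the probability that dim_{F_q}(R|_{(S_0,…,S_{n-1})}) ≥ km − n(m − λ) + ℓ is at most q^{−ℓ} · ( 1/(1 − q^{−mn}) + 1/q^{km − n(m−λ)} ). Equivalently, the number of k-dimensional F_{q^m}-subspaces R of F_{q^m}^n satisfying dim_{F_q}(R|_{(S_0,…,S_{n-1})}) ≥ km − n(m−λ) + ℓ is at most q^{−ℓ} · ( 1/(1 − q^{−mn}) + 1/q^{km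 − n(m−λ)} ) times the total number of k-dimensional F_{q^m}-subspaces of F_{q^m}^n. -/
/-!
The general linear group of `F^n` acts transitively on nonzero vectors, so every nonzero vector
lies in the same number of `k`-dimensional subspaces. Double counting then gives the exact average
of `|R ∩ V|` over all `[n, k]` codes `R`, where `V = S_0 × ⋯ × S_{n-1}`: it is
`1 + (q^{nλ} - 1)(q^{mk} - 1)/(q^{mn} - 1) ≤ 1 + q^{km - n(m-λ)}/(1 - q^{-mn})`.
Since `|R|_S| = q^{dim R|_S}`, Markov's inequality for `q^{dim R|_S}` gives the bound.
-/

open Module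

open Finset

theorem Submodule.natCard_pi {ι R : Type*} [Semiring R] [Fintype ι] {φ : ι → Type*}
    [∀ i, AddCommMonoid (φ i)] [∀ i, Module R (φ i)] (p : ∀ i, Submodule R (φ i)) :
    Nat.card (Submodule.pi Set.univ p) = ∏ i, Nat.card (p i) :=
  (Nat.card_congr (Equiv.Set.univPi fun i => (p i : Set (φ i)))).trans Nat.card_pi

theorem Submodule.card_filter_mem_erase_zero_add_one {R M : Type*} [Semiring R]
    [AddCommMonoid M] [Module R M] [Fintype M] [DecidableEq M] (W : Submodule R M)
    [DecidablePred (· ∈ W)] :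
    #(({w | w ∈ W} : Finset M).erase 0) + 1 = Nat.card W := by
  rw [card_erase_add_one (by simp), Nat.card_eq_fintype_card, Fintype.card_subtype]

theorem card_filter_le_sum_div {ι : Type*} (s : Finset ι) {f : ι → ℝ} (hf : ∀ i ∈ s, 0 ≤ f i)
    {a : ℝ} (ha : 0 < a) [DecidablePred (a ≤ f ·)] :
    (#{i ∈ s | a ≤ f i} : ℝ) ≤ (∑ i ∈ s, f i) / a := by
  rw [le_div_iff₀ ha, ← nsmul_eq_mul]
  exact (card_nsmul_le_sum _ f a fun i hi => (mem_filter.1 hi).2).trans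
    (sum_le_sum_of_subset_of_nonneg (filter_subset _ s) fun i hi _ => hf i hi)

theorem sub_one_mul_sub_one_div_le {a b c t : ℝ} (ha : 1 ≤ a) (hb : 1 ≤ b) (ht : 1 ≤ t)
    (habct : a * b = c * t) : (a - 1) * (b - 1) / (t - 1) ≤ c / (1 - t⁻¹) := by
  have h1t : 1 - t⁻¹ = (t - 1) / t := by field_simp
  rw [h1t, div_div_eq_mul_div, ← habct]
  exact div_le_div_of_nonneg_right (by nlinarith) (by linarith)

theorem exists_linearEquiv_apply_eq {F M : Type*} [Field F] [AddCommGroup M] [Module F M]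
    {v w : M} (hv : v ≠ 0) (hw : w ≠ 0) : ∃ e : M ≃ₗ[F] M, e v = w := by
  obtain ⟨e, he⟩ := Submodule.exists_linearEquiv_restrict_eq
    ((LinearEquiv.toSpanNonzeroSingleton F M v hv).symm ≪≫ₗ
      LinearEquiv.toSpanNonzeroSingleton F M w hw)
  refine ⟨e, ?_⟩
  have := (he ⟨v, Submodule.mem_span_singleton_self v⟩).symm
  rwa [LinearEquiv.trans_apply, ← LinearEquiv.coord, LinearEquiv.coord_self,
    LinearEquiv.toSpanNonzeroSingleton_one] at this

section Counting

variable (F M : Type*) [Field F] [AddCommGroup M] [Module F M] [Fintype (Submodule F M)]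

noncomputable def subspacesOfFinrank (k : ℕ) : Finset (Submodule F M) :=
  {R | finrank F R = k}

variable {F M}

@[simp]
theorem mem_subspacesOfFinrank {k : ℕ} {R : Submodule F M} :
    R ∈ subspacesOfFinrank F M k ↔ finrank F R = k := by
  simp [subspacesOfFinrank]

theorem card_subspacesOfFinrank (k : ℕ) :
    #(subspacesOfFinrank F M k) = Nat.card {R : Submodule F M // finrank F R = k} := by
  rw [Nat.card_eq_fintype_card, Fintype.card_subtype, subspacesOfFinrank]

open Classical in
theorem card_filter_mem_subspacesOfFinrank_eq (k : ℕ) {v w : M} (hv : v ≠ 0) (hw : w ≠ 0) :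
    #{R ∈ subspacesOfFinrank F M k | v ∈ R} = #{R ∈ subspacesOfFinrank F M k | w ∈ R} := by
  obtain ⟨e, rfl⟩ := exists_linearEquiv_apply_eq (F := F) hv hw
  refine card_equiv (Submodule.orderIsoMapComap e).toEquiv fun R => ?_
  simp [LinearEquiv.finrank_map_eq, Submodule.mem_map_equiv]

open Classical in
theorem sum_card_filter_mem_eq (k : ℕ) {T : Finset M} (hT : 0 ∉ T) {v : M} (hv : v ≠ 0) :
    ∑ R ∈ subspacesOfFinrank F M k, #{w ∈ T | w ∈ R} =
      #T * #{R ∈ subspacesOfFinrank F M k | v ∈ R} := by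
  have := sum_card_bipartiteAbove_eq_sum_card_bipartiteBelow (fun w (R : Submodule F M) => w ∈ R)
    (s := T) (t := subspacesOfFinrank F M k)
  simp only [bipartiteAbove, bipartiteBelow] at this
  rw [← this, ← smul_eq_mul, ← sum_const]
  exact sum_congr rfl fun w hw =>
    card_filter_mem_subspacesOfFinrank_eq k (ne_of_mem_of_not_mem hw hT) hv

open Classical in
theorem card_filter_mem_subspacesOfFinrank_mul [Finite M] (k : ℕ) {v : M} (hv : v ≠ 0) :
    #{R ∈ subspacesOfFinrank F M k | v ∈ R} * (Nat.card M - 1) =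
      #(subspacesOfFinrank F M k) * (Nat.card F ^ k - 1) := by
  have := Fintype.ofFinite M
  have hsum := sum_card_filter_mem_eq (F := F) k (notMem_erase 0 univ) hv
  rw [card_erase_of_mem (mem_univ 0), card_univ, ← Nat.card_eq_fintype_card] at hsum
  rw [mul_comm, ← hsum, ← smul_eq_mul, ← sum_const]
  refine sum_congr rfl fun R hR => ?_
  rw [← (mem_subspacesOfFinrank.1 hR), ← natCard_eq_pow_finrank, Nat.card_eq_fintype_card,
    Fintype.card_subtype, filter_erase, card_erase_of_mem (by simp)]

-- For trivial `M` both sides vanish: `T = ∅`, and the division is by `0`.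
open Classical in
theorem sum_card_filter_mem_eq_div [Finite F] [Finite M] (k : ℕ) {T : Finset M} (hT : 0 ∉ T) :
    (∑ R ∈ subspacesOfFinrank F M k, #{w ∈ T | w ∈ R} : ℝ) =
      #T * #(subspacesOfFinrank F M k) * ((Nat.card F : ℝ) ^ k - 1) / (Nat.card M - 1) := by
  rcases T.eq_empty_or_nonempty with rfl | ⟨v, hvT⟩
  · simp
  have hv : v ≠ 0 := ne_of_mem_of_not_mem hvT hT
  have : Nontrivial M := ⟨⟨v, 0, hv⟩⟩
  have hM : (1 : ℝ) < Nat.card M := by exact_mod_cast Finite.one_lt_card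
  have hF : 1 ≤ Nat.card F ^ k := Nat.one_le_pow _ _ Nat.card_pos
  rw [eq_div_iff (by linarith), ← Nat.cast_sum, sum_card_filter_mem_eq (F := F) k hT hv]
  have := card_filter_mem_subspacesOfFinrank_mul (F := F) k hv
  rw [← Nat.cast_pow, ← Nat.cast_pred Nat.card_pos, ← Nat.cast_pred (by omega)]
  norm_cast
  rw [mul_assoc, this, mul_assoc]

end Counting

open Classical in
theorem sum_card_subspaceSubcode_eq {K F : Type*} [Field K] [Field F] [Algebra K F] [Finite F]
    {n : ℕ} [Fintype (Submodule F (Fin n → F))] (S : Fin n → Submodule K F) (k : ℕ) :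
    (∑ R ∈ subspacesOfFinrank F (Fin n → F) k, Nat.card (subspaceSubcode R S) : ℝ) =
      #(subspacesOfFinrank F (Fin n → F) k) * (1 + (∏ i, (Nat.card (S i) : ℝ) - 1) *
        ((Nat.card F : ℝ) ^ k - 1) / ((Nat.card F : ℝ) ^ n - 1)) := by
  have := Fintype.ofFinite F
  set T : Finset (Fin n → F) := ({w | w ∈ Submodule.pi Set.univ S} : Finset _).erase 0
  have hT : #T + 1 = ∏ i, Nat.card (S i) :=
    (Submodule.card_filter_mem_erase_zero_add_one _).trans (Submodule.natCard_pi S)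
  have hsub (R : Submodule F (Fin n → F)) :
      Nat.card (subspaceSubcode R S) = #{w ∈ T | w ∈ R} + 1 := by
    rw [← Submodule.card_filter_mem_erase_zero_add_one]
    congr 2
    ext w
    simp [T, subspaceSubcode, and_comm, and_left_comm]
  simp only [hsub, Nat.cast_add, Nat.cast_one, sum_add_distrib, sum_const, nsmul_one]
  rw [sum_card_filter_mem_eq_div k (notMem_erase 0 _), Nat.card_fun, Nat.card_fin,
    ← Nat.cast_prod, ← hT]
  push_cast
  ring

theorem sum_card_subspaceSubcode_le {K F : Type*} [Field K] [Fintype K] [Field F] [Algebra K F]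
    [FiniteDimensional K F] {q n k m lam : ℕ} (hq : Fintype.card K = q) (hm : finrank K F = m)
    (S : Fin n → Submodule K F) (hS : ∀ i, finrank K (S i) = lam)
    [Fintype (Submodule F (Fin n → F))] :
    (∑ R ∈ subspacesOfFinrank F (Fin n → F) k, Nat.card (subspaceSubcode R S) : ℝ) ≤
      #(subspacesOfFinrank F (Fin n → F) k) *
        (1 + (q : ℝ) ^ ((k * m : ℤ) - n * ((m : ℤ) - lam)) / (1 - (q : ℝ) ^ (-((m : ℤ) * n)))) := by
  have : Finite F := Module.finite_of_finite K
  have hK : Nat.card K = q := Nat.card_eq_fintype_card.trans hq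
  have hF : Nat.card F = q ^ m := by rw [natCard_eq_pow_finrank (K := K), hK, hm]
  have hSi (i : Fin n) : Nat.card (S i) = q ^ lam := by
    rw [natCard_eq_pow_finrank (K := K), hK, hS]
  have hq1 : (1 : ℝ) ≤ q := by exact_mod_cast hK ▸ Nat.card_pos
  rw [sum_card_subspaceSubcode_eq]
  simp only [hF, hSi, prod_const, card_univ, Fintype.card_fin, Nat.cast_pow, ← pow_mul]
  refine mul_le_mul_of_nonneg_left ((add_le_add_iff_left 1).2 ?_) (Nat.cast_nonneg _)
  rw [zpow_neg, show ((m : ℤ) * n) = ((m * n : ℕ) : ℤ) by push_cast; rfl, zpow_natCast]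
  refine sub_one_mul_sub_one_div_le (one_le_pow₀ hq1) (one_le_pow₀ hq1) (one_le_pow₀ hq1) ?_
  simp only [← zpow_natCast, ← zpow_add₀ (one_pos.trans_le hq1).ne']
  congr 1
  push_cast
  ring

open Classical in
theorem natCard_le_finrank_subspaceSubcode_le_sum_div {K F : Type*} [Field K] [Fintype K]
    [Field F] [Algebra K F] [FiniteDimensional K F] {q n : ℕ} (hq : Fintype.card K = q)
    (S : Fin n → Submodule K F) [Fintype (Submodule F (Fin n → F))] (k : ℕ) (d : ℤ) :
    (Nat.card {R : Submodule F (Fin n → F) //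
        finrank F R = k ∧ d ≤ (finrank K (subspaceSubcode R S) : ℤ)} : ℝ) ≤
      (∑ R ∈ subspacesOfFinrank F (Fin n → F) k, Nat.card (subspaceSubcode R S) : ℝ) /
        (q : ℝ) ^ d := by
  have : Finite F := Module.finite_of_finite K
  have hq1 : (1 : ℝ) ≤ q := by rw [← hq]; exact_mod_cast Fintype.card_pos
  refine le_trans ?_ (card_filter_le_sum_div _ (fun _ _ => Nat.cast_nonneg _)
    (zpow_pos (one_pos.trans_le hq1) d))
  rw [Nat.card_eq_fintype_card, Fintype.card_subtype, subspacesOfFinrank, filter_filter,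
    Nat.cast_le]
  refine card_le_card (monotone_filter_right _ fun R _ h => ⟨h.1, ?_⟩)
  rw [natCard_eq_pow_finrank (K := K), Nat.card_eq_fintype_card, hq, Nat.cast_pow,
    ← zpow_natCast]
  exact zpow_le_zpow_right₀ hq1 h.2

theorem stmt_1_general {K F : Type*} [Field K] [Fintype K] [Field F] [Algebra K F]
    [FiniteDimensional K F] {q n k m lam : ℕ} (hq : Fintype.card K = q)
    (hm : finrank K F = m)
    (S : Fin n → Submodule K F) (hS : ∀ i, finrank K (S i) = lam) (ℓ : ℤ) :
    (Nat.card {R : Submodule F (Fin n → F) //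
        finrank F R = k ∧
        (k * m : ℤ) - n * ((m : ℤ) - lam) + ℓ ≤ (finrank K (subspaceSubcode R S) : ℤ)} : ℝ)
      ≤ (q : ℝ) ^ (-ℓ) *
        (1 / (1 - (q : ℝ) ^ (-((m : ℤ) * n))) +
          1 / (q : ℝ) ^ ((k * m : ℤ) - n * ((m : ℤ) - lam))) *
        (Nat.card {R : Submodule F (Fin n → F) // finrank F R = k} : ℝ) := by
  have : Finite F := Module.finite_of_finite K
  have := Fintype.ofFinite (Submodule F (Fin n → F))
  have hq0 : (0 : ℝ) < q := by rw [← hq]; exact_mod_cast Fintype.card_pos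
  rw [← card_subspacesOfFinrank]
  calc _ ≤ _ := natCard_le_finrank_subspaceSubcode_le_sum_div hq S k _
    _ ≤ _ := div_le_div_of_nonneg_right (sum_card_subspaceSubcode_le hq hm S hS) (by positivity)
    _ = _ := by
      rw [zpow_add₀ hq0.ne', zpow_neg (q : ℝ) ℓ]
      field_simp
      ring

/-- counting form: among the `k`-dimensional `F_{q^m}`-subspaces `R` of
`F_{q^m}^n`, the proportion of those with
`dim_{F_q} R|_{(S_0,…,S_{n-1})} ≥ km - n(m-λ) + ℓ` is at most
`q^{-ℓ} (1/(1-q^{-mn}) + 1/q^{km-n(m-λ)})`. -/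
theorem stmt_1 {K F : Type*} [Field K] [Fintype K] [Field F] [Algebra K F]
    [FiniteDimensional K F] {q n k m lam : ℕ} (hq : Fintype.card K = q)
    (hm : finrank K F = m) (hm1 : 1 ≤ m)
    (S : Fin n → Submodule K F) (hS : ∀ i, finrank K (S i) = lam) (hlm : lam ≤ m)
    (hkm : (n : ℤ) * ((m : ℤ) - lam) < (k : ℤ) * m) (ℓ : ℤ) :
    (Nat.card {R : Submodule F (Fin n → F) //
        finrank F R = k ∧
        (k * m : ℤ) - n * ((m : ℤ) - lam) + ℓ ≤ (finrank K (subspaceSubcode R S) : ℤ)} : ℝ)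
      ≤ (q : ℝ) ^ (-ℓ) *
        (1 / (1 - (q : ℝ) ^ (-((m : ℤ) * n))) +
          1 / (q : ℝ) ^ ((k * m : ℤ) - n * ((m : ℤ) - lam))) *
        (Nat.card {R : Submodule F (Fin n → F) // finrank F R = k} : ℝ) :=
  stmt_1_general hq hm S hS ℓ
end

section
/- Let q be a prime power, m ≥ 1, and let B be an F_q-basis of F_{q^m} with dual basis B*. Let C ⊆ F_{q^m}^n be a linear code with generator matrix G (a matrix whose row span over F_{q^m} is C) and parity-check matrix H (a matrix such that C = {c : H·cᵀ = 0}). Then the F_q-row span of ExpMat_B(G) equals Exp_B(C), and Exp_B(C) = {v ∈ F_q^{mn} : ExpMat_{B*}(H) · vᵀ = 0}. -/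
open Module

/-- Expansion of a vector over a basis `B` of `F` over `K`, as a `K`-linear map:
the entry of index `(i, j)` is the `j`-th coordinate of `c i` in the basis `B`. -/
noncomputable def expLin {K F : Type*} [Field K] [Field F] [Algebra K F] {m : ℕ}
    (B : Basis (Fin m) K F) (ι : Type*) : (ι → F) →ₗ[K] (ι × Fin m → K) where
  toFun c := fun p => B.repr (c p.1) p.2
  map_add' c d := by funext p; simp
  map_smul' k c := by funext p; simp

/-- Expansion of a matrix over a basis `B`: the row of index `(i, j)` is
`Exp_B(b_j • (row i of M))`. -/
noncomputable def expMat {K F : Type*} [Field K] [Field F] [Algebra K F] {m : ℕ}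
    (B : Basis (Fin m) K F) {ι κ : Type*} (M : Matrix ι κ F) :
    Matrix (ι × Fin m) (κ × Fin m) K :=
  fun p q => B.repr (B p.2 * M p.1 q.1) q.2

open scoped Pointwise

/-!
The rows of `ExpMat_B(G)` are the expansions of the vectors `b_j • g_i`, and these span `C`
over `F_q` because `B` spans `F_{q^m}`. For the parity check let `τ` be the trace, so that
`τ (b_i * b*_j) = δ_ij`. Then `B.repr x j = τ (x * b*_j)` and `τ (a * b)` is the dot product of
the `B*`-coordinates of `a` with the `B`-coordinates of `b`; together these give
`ExpMat_{B*}(H) · Exp_B(c) = Exp_B(H · c)`, and `Exp_B` is a bijection.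
-/

section Expansion

variable {K F : Type*} [Field K] [Field F] [Algebra K F] {m : ℕ} (B : Basis (Fin m) K F)

theorem expLin_injective (ι : Type*) : Function.Injective (expLin B ι) := fun _ _ h =>
  funext fun l => B.repr.injective <| Finsupp.ext fun t => congr_fun h (l, t)

theorem expLin_surjective (ι : Type*) : Function.Surjective (expLin B ι) := fun v =>
  ⟨fun l => B.equivFun.symm fun t => v (l, t), funext fun p => by
    simp [expLin, ← Basis.equivFun_apply]⟩

theorem expMat_apply_eq_expLin {ι κ : Type*} (M : Matrix ι κ F) (p : ι × Fin m) :
    expMat B M p = expLin B κ (B p.2 • M p.1) :=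
  rfl

theorem span_range_expMat {ι κ : Type*} (M : Matrix ι κ F) :
    Submodule.span K (Set.range fun p => expMat B M p) =
      ((Submodule.span F (Set.range fun i => M i)).restrictScalars K).map (expLin B κ) := by
  have hrange : (Set.range fun p : ι × Fin m => B p.2 • M p.1) =
      Set.range B • Set.range fun i => M i := by
    rw [Set.range_smul_range B fun i => M i]
    exact ((Equiv.prodComm _ _).surjective.range_comp _).symm
  simp_rw [expMat_apply_eq_expLin, Set.range_comp' (expLin B κ), Submodule.span_image, hrange,
    Submodule.span_smul_of_span_eq_top B.span_eq]

end Expansion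

section TraceDual

variable {K F : Type*} [Field K] [Field F] [Algebra K F] {m : ℕ} {B Bd : Basis (Fin m) K F}
  {τ : F →ₗ[K] K}

theorem repr_eq_of_dual (hτ : ∀ i j, τ (B i * Bd j) = if i = j then 1 else 0) (x : F)
    (j : Fin m) : B.repr x j = τ (x * Bd j) := by
  conv_rhs => rw [← B.sum_repr x]
  simp only [Finset.sum_mul, smul_mul_assoc, map_sum, map_smul, hτ, smul_eq_mul, mul_ite,
    mul_one, mul_zero, Finset.sum_ite_eq', Finset.mem_univ, if_true]

theorem dual_symm (hτ : ∀ i j, τ (B i * Bd j) = if i = j then 1 else 0) (i j : Fin m) :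
    τ (Bd i * B j) = if i = j then 1 else 0 := by
  rw [mul_comm, hτ]
  grind

theorem sum_repr_mul_repr_of_dual (hτ : ∀ i j, τ (B i * Bd j) = if i = j then 1 else 0)
    (a b : F) : ∑ t, Bd.repr a t * B.repr b t = τ (a * b) := by
  conv_rhs => rw [← B.sum_repr b]
  simp only [Finset.mul_sum, mul_smul_comm, map_sum, map_smul, smul_eq_mul,
    ← repr_eq_of_dual (dual_symm hτ), mul_comm]

theorem expMat_mulVec_expLin_of_dual (hτ : ∀ i j, τ (B i * Bd j) = if i = j then 1 else 0)
    {ι κ : Type*} [Fintype κ] (H : Matrix ι κ F) (w : κ → F) :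
    (expMat Bd H).mulVec (expLin B κ w) = expLin B ι (H.mulVec w) := by
  ext ⟨i, j⟩
  change ∑ p : κ × Fin m, Bd.repr (Bd j * H i p.1) p.2 * B.repr (w p.1) p.2 =
    B.repr (∑ l, H i l * w l) j
  rw [Fintype.sum_prod_type, repr_eq_of_dual hτ, Finset.sum_mul, map_sum]
  simp_rw [sum_repr_mul_repr_of_dual hτ]
  exact Finset.sum_congr rfl fun l _ => by ring_nf

end TraceDual

theorem algebraMap_trace_eq_sum_fin_pow {K F : Type*} [Field K] [Fintype K] [Field F]
    [Algebra K F] {m : ℕ} (B : Basis (Fin m) K F) (x : F) :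
    algebraMap K F (Algebra.trace K F x) = ∑ t : Fin m, x ^ Fintype.card K ^ (t : ℕ) := by
  have : Module.Finite K F := .of_basis B
  have : Finite F := Module.finite_of_finite K
  rw [FiniteField.algebraMap_trace_eq_sum_pow, finrank_eq_card_basis B, Fintype.card_fin,
    Finset.sum_range, Nat.card_eq_fintype_card]

theorem stmt_5_general {K F : Type*} [Field K] [Fintype K] [Field F] [Algebra K F]
    {q m n k r : ℕ} (hq : Fintype.card K = q)
    (B Bd : Basis (Fin m) K F)
    (hdual : ∀ i j, (∑ t : Fin m, (B i * Bd j) ^ q ^ (t : ℕ)) =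
      (if i = j then (1 : F) else 0))
    (C : Submodule F (Fin n → F))
    (G : Matrix (Fin k) (Fin n) F)
    (hG : Submodule.span F (Set.range fun i => G i) = C)
    (H : Matrix (Fin r) (Fin n) F)
    (hH : ∀ c : Fin n → F, c ∈ C ↔ H.mulVec c = 0) :
    Submodule.span K (Set.range fun p => expMat B G p) =
        (C.restrictScalars K).map (expLin B (Fin n)) ∧
      ∀ v : Fin n × Fin m → K,
        v ∈ (C.restrictScalars K).map (expLin B (Fin n)) ↔
          (expMat Bd H).mulVec v = 0 := by
  have htrace : ∀ i j, Algebra.trace K F (B i * Bd j) = if i = j then 1 else 0 := fun i j =>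
    (algebraMap K F).injective <| by
      rw [algebraMap_trace_eq_sum_fin_pow B, hq, hdual]
      split_ifs <;> simp
  refine ⟨by rw [← hG, span_range_expMat], fun v => ?_⟩
  obtain ⟨c, rfl⟩ := expLin_surjective B (Fin n) v
  rw [← SetLike.mem_coe, Submodule.map_coe, (expLin_injective B _).mem_set_image,
    expMat_mulVec_expLin_of_dual htrace, LinearMap.map_eq_zero_iff _ (expLin_injective B _)]
  exact hH c

/-- if `G` is a generator matrix and `H` a parity-check matrix of a code
`C ⊆ F_{q^m}^n`, and `B*` is the trace-dual basis of `B`, then `ExpMat_B(G)` is a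
generator matrix of `Exp_B(C)` and `ExpMat_{B*}(H)` is a parity-check matrix of
`Exp_B(C)`. -/
theorem stmt_5 {K F : Type*} [Field K] [Fintype K] [Field F] [Algebra K F]
    {q m n k r : ℕ} (hq : Fintype.card K = q) (hm1 : 1 ≤ m)
    (B Bd : Basis (Fin m) K F)
    (hdual : ∀ i j, (∑ t : Fin m, (B i * Bd j) ^ q ^ (t : ℕ)) =
      (if i = j then (1 : F) else 0))
    (C : Submodule F (Fin n → F))
    (G : Matrix (Fin k) (Fin n) F)
    (hG : Submodule.span F (Set.range fun i => G i) = C)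
    (H : Matrix (Fin r) (Fin n) F)
    (hH : ∀ c : Fin n → F, c ∈ C ↔ H.mulVec c = 0) :
    Submodule.span K (Set.range fun p => expMat B G p) =
        (C.restrictScalars K).map (expLin B (Fin n)) ∧
      ∀ v : Fin n × Fin m → K,
        v ∈ (C.restrictScalars K).map (expLin B (Fin n)) ↔
          (expMat Bd H).mulVec v = 0 :=
  stmt_5_general hq B Bd hdual C G hG H hH
end

section
/- Let F be a finite field, let x ∈ F^n have pairwise distinct entries, let y ∈ F^n have all entries nonzero, and let k ≥ 1. Then GRS_k(x, y) ⋆_F GRS_k(x, y) = GRS_{2k-1}(x, y ⋆ y). In particular, if 2k − 1 ≤ n then dim_F (GRS_k(x,y))^{⋆2} = 2k − 1. -/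
open Module

/-- The generalised Reed–Solomon code of dimension (at most) `k` with support `x`
and multiplier `y`: the image of polynomials of degree `< k` under
`f ↦ (y i * f(x i))_i`. -/
noncomputable def GRS (F : Type*) [Field F] (n k : ℕ) (x y : Fin n → F) :
    Submodule F (Fin n → F) :=
  (Polynomial.degreeLT F k).map
    (LinearMap.pi fun i => y i • Polynomial.leval (x i))

/-- The star product of two codes: the span of the componentwise products of
their codewords. -/
def codeStar {F : Type*} [CommRing F] {n : ℕ} (A B : Submodule F (Fin n → F)) :
    Submodule F (Fin n → F) :=
  Submodule.span F {c | ∃ a ∈ A, ∃ b ∈ B, c = fun i => a i * b i}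

open Polynomial in
lemma GRS_span (F : Type*) [Field F] (n k : ℕ) (x y : Fin n → F) :
    GRS F n k x y =
      Submodule.span F ((fun m : ℕ => fun i => y i * x i ^ m) '' (Set.Iio k)) := by
  classical
  rw [GRS, degreeLT_eq_span_X_pow, Submodule.map_span]
  congr 1
  ext v
  simp only [Finset.coe_image, Set.image_image, Set.mem_image, Finset.mem_coe,
    Finset.mem_range, Set.mem_Iio]
  constructor
  · rintro ⟨m, hm, rfl⟩
    exact ⟨m, hm, by funext i; simp [LinearMap.pi_apply]⟩
  · rintro ⟨m, hm, rfl⟩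
    exact ⟨m, hm, by funext i; simp [LinearMap.pi_apply]⟩

lemma GRS_monomial_mem (F : Type*) [Field F] (n k : ℕ) (x y : Fin n → F)
    {m : ℕ} (hm : m < k) : (fun i => y i * x i ^ m) ∈ GRS F n k x y := by
  rw [GRS_span]
  exact Submodule.subset_span ⟨m, hm, rfl⟩

open Polynomial in
/-- `GRS_k(x,y) ⋆ GRS_k(x,y) = GRS_{2k-1}(x, y ⋆ y)`; in particular if
`2k - 1 ≤ n` then the square of `GRS_k(x,y)` has dimension `2k - 1`. -/
theorem stmt_12 {F : Type*} [Field F] [Fintype F] {n k : ℕ} (hk : 1 ≤ k)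
    (x y : Fin n → F) (hx : Function.Injective x) (hy : ∀ i, y i ≠ 0) :
    codeStar (GRS F n k x y) (GRS F n k x y) =
        GRS F n (2 * k - 1) x (fun i => y i * y i) ∧
      (2 * k - 1 ≤ n →
        finrank F (codeStar (GRS F n k x y) (GRS F n k x y)) = 2 * k - 1) := by
  have heq : codeStar (GRS F n k x y) (GRS F n k x y) =
      GRS F n (2 * k - 1) x (fun i => y i * y i) := by
    apply le_antisymm
    · rw [codeStar, Submodule.span_le]
      rintro c ⟨a, ha, b, hb, rfl⟩
      obtain ⟨f, hf, rfl⟩ := ha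
      obtain ⟨g, hg, rfl⟩ := hb
      simp only [SetLike.mem_coe] at hf hg ⊢
      refine ⟨f * g, ?_, ?_⟩
      · rw [SetLike.mem_coe, Polynomial.mem_degreeLT]
        rcases eq_or_ne f 0 with rfl | hf0
        · rw [zero_mul, Polynomial.degree_zero]
          exact_mod_cast WithBot.bot_lt_coe (2 * k - 1 : ℕ)
        rcases eq_or_ne g 0 with rfl | hg0
        · rw [mul_zero, Polynomial.degree_zero]
          exact_mod_cast WithBot.bot_lt_coe (2 * k - 1 : ℕ)
        rw [degree_mul, degree_eq_natDegree hf0, degree_eq_natDegree hg0]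
        have h1 : f.natDegree < k := natDegree_lt_iff_degree_lt hf0 |>.mpr (mem_degreeLT.mp hf)
        have h2 : g.natDegree < k := natDegree_lt_iff_degree_lt hg0 |>.mpr (mem_degreeLT.mp hg)
        exact_mod_cast Nat.cast_lt.mpr (by omega : f.natDegree + g.natDegree < 2 * k - 1)
      · funext i
        simp only [LinearMap.pi_apply, LinearMap.smul_apply, leval_apply, smul_eq_mul,
          eval_mul]
        ring
    · rw [GRS_span, Submodule.span_le]
      rintro c ⟨m, hm, rfl⟩
      set a := min m (k - 1) with ha
      set b := m - a with hb
      have hab : a + b = m := by omega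
      have hak : a < k := by omega
      have hbk : b < k := by
        simp only [Set.mem_Iio] at hm; omega
      rw [codeStar]
      apply Submodule.subset_span
      refine ⟨_, GRS_monomial_mem F n k x y hak, _, GRS_monomial_mem F n k x y hbk, ?_⟩
      funext i
      show y i * y i * x i ^ m = y i * x i ^ a * (y i * x i ^ b)
      rw [← hab, pow_add]
      ring
  refine ⟨heq, fun hn => ?_⟩
  rw [heq]
  -- injectivity of the evaluation map on degreeLT (2k-1)
  set L : F[X] →ₗ[F] (Fin n → F) :=
    LinearMap.pi fun i => (y i * y i) • Polynomial.leval (x i) with hL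
  have hinj : Function.Injective (L.comp (Polynomial.degreeLT F (2 * k - 1)).subtype) := by
    rw [← LinearMap.ker_eq_bot, LinearMap.ker_eq_bot']
    rintro ⟨f, hf⟩ hf0
    have heval : ∀ i, f.eval (x i) = 0 := by
      intro i
      have := congrFun hf0 i
      simp only [LinearMap.comp_apply, Submodule.subtype_apply, hL, LinearMap.pi_apply,
        LinearMap.smul_apply, leval_apply, smul_eq_mul, Pi.zero_apply] at this
      exact (mul_eq_zero.mp this).resolve_left (mul_ne_zero (hy i) (hy i))
    have hfz : f = 0 := by
      rcases eq_or_ne f 0 with rfl | hf0'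
      · rfl
      refine Polynomial.eq_zero_of_natDegree_lt_card_of_eval_eq_zero f hx heval ?_
      rw [Fintype.card_fin]
      exact lt_of_lt_of_le ((natDegree_lt_iff_degree_lt hf0').mpr (mem_degreeLT.mp hf)) hn
    exact Subtype.ext hfz
  have hrange : GRS F n (2 * k - 1) x (fun i => y i * y i) =
      LinearMap.range (L.comp (Polynomial.degreeLT F (2 * k - 1)).subtype) := by
    rw [LinearMap.range_comp, Submodule.range_subtype, GRS]
  have hdim : finrank F (Polynomial.degreeLT F (2 * k - 1)) = 2 * k - 1 := by
    rw [(Polynomial.degreeLTEquiv F (2 * k - 1)).finrank_eq, Module.finrank_fin_fun]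
  rw [hrange, LinearMap.finrank_range_of_inj hinj, hdim]
end

section
/- Let q be a prime power and let S ⊆ F_{q^3} be an F_q-subspace of dimension 2. Then S² = F_{q^3}. Moreover, for any F_q-basis (γ_0, γ_1) of S, the triple (γ_0², γ_0γ_1, γ_1²) is an F_q-basis of F_{q^3}. -/
open Module

/-!
As `[F : K] = 3` is prime, `t = γ₀ / γ₁ ∉ K` has a minimal polynomial of degree `3`, so
`t², t, 1` are independent; multiplying by `γ₁²` gives the independence of `γ₀², γ₀γ₁, γ₁²`,
which then span `F`. Applied to a basis of `S`, these products lie in `S²`.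
-/

/-- The square `S²` of a subspace `S ⊆ F`: the `K`-span of all products of two
elements of `S`. -/
def sqSubspace {K F : Type*} [Field K] [Field F] [Algebra K F] (S : Submodule K F) :
    Submodule K F :=
  Submodule.span K {x | ∃ a ∈ S, ∃ b ∈ S, x = a * b}

section

variable {K F : Type*} [Field K] [Field F] [Algebra K F]

theorem natDegree_minpoly_eq_finrank_of_prime [FiniteDimensional K F]
    (hp : (finrank K F).Prime) {x : F} (hx : x ∉ (algebraMap K F).range) :
    (minpoly K x).natDegree = finrank K F := by
  have hint : IsIntegral K x := .of_finite K x
  have h2 : 2 ≤ (minpoly K x).natDegree := (minpoly.two_le_natDegree_iff hint).mpr hx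
  exact (hp.eq_one_or_self_of_dvd _ (minpoly.degree_dvd hint)).resolve_left (by omega)

theorem linearIndependent_sq_self_one {x : F} (hx : 3 ≤ (minpoly K x).natDegree) :
    LinearIndependent K ![x ^ 2, x, 1] := by
  have hrev : Function.Injective
      fun i : Fin 3 => (⟨2 - i, by omega⟩ : Fin (minpoly K x).natDegree) := by
    intro i j h
    simp only [Fin.mk.injEq] at h
    omega
  convert (linearIndependent_pow x).comp _ hrev using 1
  ext i
  fin_cases i <;> simp

theorem linearIndependent_sq_mul_sq [FiniteDimensional K F] (hp : (finrank K F).Prime)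
    (h3 : 3 ≤ finrank K F) {a b : F} (hab : LinearIndependent K ![a, b]) :
    LinearIndependent K ![a ^ 2, a * b, b ^ 2] := by
  obtain ⟨hb, hba⟩ := linearIndependent_fin2.mp hab
  simp only [Matrix.cons_val_one, Matrix.cons_val_zero] at hb hba
  have hirr : a / b ∉ (algebraMap K F).range := by
    rintro ⟨k, hk⟩
    exact hba k (by rw [Algebra.smul_def, hk, div_mul_cancel₀ _ hb])
  have hli := linearIndependent_sq_self_one
    (h3.trans (natDegree_minpoly_eq_finrank_of_prime hp hirr).ge)
  have hmul :
      ![a ^ 2, a * b, b ^ 2] = LinearMap.mulLeft K (b ^ 2) ∘ ![(a / b) ^ 2, a / b, 1] := by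
    ext i
    fin_cases i <;> simp [field]
  rw [hmul]
  exact hli.map' _ (LinearMap.ker_eq_bot.mpr (mul_right_injective₀ (pow_ne_zero 2 hb)))

end

theorem stmt_13_general {K F : Type*} [Field K] [Field F] [Algebra K F]
    (h3 : finrank K F = 3)
    (S : Submodule K F) (hS : finrank K S = 2) :
    sqSubspace S = ⊤ ∧
      ∀ γ0 γ1 : F, γ0 ∈ S → γ1 ∈ S → LinearIndependent K ![γ0, γ1] →
        LinearIndependent K ![γ0 ^ 2, γ0 * γ1, γ1 ^ 2] ∧
          Submodule.span K {γ0 ^ 2, γ0 * γ1, γ1 ^ 2} = (⊤ : Submodule K F) := by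
  have : FiniteDimensional K F := Module.finite_of_finrank_eq_succ h3
  have hbasis (γ0 γ1 : F) (hγ : LinearIndependent K ![γ0, γ1]) :
      LinearIndependent K ![γ0 ^ 2, γ0 * γ1, γ1 ^ 2] ∧
        Submodule.span K {γ0 ^ 2, γ0 * γ1, γ1 ^ 2} = (⊤ : Submodule K F) := by
    have hsq := linearIndependent_sq_mul_sq (h3 ▸ Nat.prime_three) h3.ge hγ
    refine ⟨hsq, ?_⟩
    rw [← hsq.span_eq_top_of_card_eq_finrank (by simp [h3]), Matrix.range_cons,
      Matrix.range_cons_cons_empty, Set.singleton_union]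
  refine ⟨?_, fun γ0 γ1 _ _ => hbasis γ0 γ1⟩
  let b := finBasisOfFinrankEq K S hS
  have hb : LinearIndependent K ![(b 0 : F), b 1] := by
    have hfun : ![(b 0 : F), b 1] = S.subtype ∘ b := by
      ext i
      fin_cases i <;> rfl
    rw [hfun]
    exact b.linearIndependent.map' S.subtype S.ker_subtype
  rw [eq_top_iff, ← (hbasis _ _ hb).2]
  refine Submodule.span_mono ?_
  simp only [Set.insert_subset_iff, Set.singleton_subset_iff]
  exact ⟨⟨_, (b 0).2, _, (b 0).2, sq _⟩, ⟨_, (b 0).2, _, (b 1).2, rfl⟩,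
    ⟨_, (b 1).2, _, (b 1).2, sq _⟩⟩

/-- if `S ⊆ F_{q^3}` is an `F_q`-subspace of dimension `2`, then
`S² = F_{q^3}`; moreover for any `F_q`-basis `(γ_0, γ_1)` of `S`, the triple
`(γ_0², γ_0γ_1, γ_1²)` is an `F_q`-basis of `F_{q^3}`. -/
theorem stmt_13 {K F : Type*} [Field K] [Fintype K] [Field F] [Algebra K F]
    [FiniteDimensional K F] (h3 : finrank K F = 3)
    (S : Submodule K F) (hS : finrank K S = 2) :
    sqSubspace S = ⊤ ∧
      ∀ γ0 γ1 : F, γ0 ∈ S → γ1 ∈ S → LinearIndependent K ![γ0, γ1] →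
        LinearIndependent K ![γ0 ^ 2, γ0 * γ1, γ1 ^ 2] ∧
          Submodule.span K {γ0 ^ 2, γ0 * γ1, γ1 ^ 2} = (⊤ : Submodule K F) :=
  stmt_13_general h3 S hS
end

section
/- Let q be a prime power and m ≥ 1. Let C ⊆ F_{q^m}^n be a linear code and S ⊆ F_{q^m} an F_q-subspace of dimension 2 with F_q-basis B_S = (γ_0, γ_1) such that (γ_0², γ_0γ_1, γ_1²) is linearly independent over F_q; write B_{S²} = (γ_0², γ_0γ_1, γ_1²). Then (Exp_{B_S}(C|_S))^{~⋆2} = Exp_{B_{S²}}((C|_S)^{⋆2}_{F_q}). -/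
open Module

/-- The twisted product of two vectors of `F_q^{2n}` (entries grouped in blocks of
length 2): the `i`-th block of the result is
`(a_i⁽⁰⁾b_i⁽⁰⁾, a_i⁽⁰⁾b_i⁽¹⁾ + a_i⁽¹⁾b_i⁽⁰⁾, a_i⁽¹⁾b_i⁽¹⁾)`. -/
def twStar2 {K : Type*} [CommRing K] {n : ℕ} (a b : Fin n × Fin 2 → K) :
    Fin n × Fin 3 → K :=
  fun p =>
    if p.2 = 0 then a (p.1, 0) * b (p.1, 0)
    else if p.2 = 1 then a (p.1, 0) * b (p.1, 1) + a (p.1, 1) * b (p.1, 0)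
    else a (p.1, 1) * b (p.1, 1)

/-- The expansion `Exp_{B_S}(C|_S)` of the subspace subcode of `C` over the basis
`B_S = (γ_0, γ_1)` of `S = span{γ_0, γ_1}`: the set of coordinate vectors (w.r.t.
`(γ_0, γ_1)`) of codewords of `C` with all entries in `S`. -/
def expSet2 (K : Type*) {F : Type*} [Field K] [Field F] [Algebra K F] {n : ℕ}
    (γ0 γ1 : F) (C : Submodule F (Fin n → F)) : Set (Fin n × Fin 2 → K) :=
  {v | ∃ c, c ∈ C ∧ (∀ i, c i ∈ Submodule.span K {γ0, γ1}) ∧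
        ∀ i, c i = v (i, 0) • γ0 + v (i, 1) • γ1}

section aux
variable {K F : Type*} [Field K] [Field F] [Algebra K F] {n : ℕ}

/-- The expansion map sending coefficient vectors to combinations of
`γ0*γ0, γ0*γ1, γ1*γ1`. -/
def phi3 (γ0 γ1 : F) : (Fin n × Fin 3 → K) →ₗ[K] (Fin n → F) where
  toFun w := fun i => w (i,0) • (γ0*γ0) + w (i,1) • (γ0*γ1) + w (i,2) • (γ1*γ1)
  map_add' x y := by funext i; simp [add_smul]; abel
  map_smul' c x := by funext i; simp [smul_smul, smul_add]

lemma phi3_inj (γ0 γ1 : F)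
    (hindsq : LinearIndependent K ![γ0 * γ0, γ0 * γ1, γ1 * γ1]) :
    Function.Injective (phi3 (n := n) (K := K) γ0 γ1) := by
  rw [← LinearMap.ker_eq_bot, LinearMap.ker_eq_bot']
  intro w hw
  funext p
  have h := congrFun hw p.1
  have h2 := (Fintype.linearIndependent_iff.mp hindsq) (fun j => w (p.1, j))
  simp [Fin.sum_univ_three, phi3] at h2
  have hz := h2 h
  obtain ⟨i, j⟩ := p
  fin_cases j <;> simp [hz]

lemma smul_mul_smul' (p q : K) (x y : F) : (p • x) * (q • y) = (p*q) • (x*y) := by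
  rw [smul_mul_assoc, mul_smul_comm, smul_smul]

lemma phi3_tw (γ0 γ1 : F) (v w : Fin n × Fin 2 → K) (i : Fin n) :
    (v (i,0) • γ0 + v (i,1) • γ1) * (w (i,0) • γ0 + w (i,1) • γ1)
      = phi3 γ0 γ1 (twStar2 v w) i := by
  simp only [phi3, LinearMap.coe_mk, AddHom.coe_mk, twStar2]
  simp only [mul_add, add_mul, smul_mul_smul']
  norm_num
  rw [mul_comm γ1 γ0, add_smul]
  abel

end aux

/-- `(Exp_{B_S}(C|_S))^{~⋆2} = Exp_{B_{S²}}((C|_S)^{⋆2}_{F_q})`, where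
`B_S = (γ_0, γ_1)` is a basis of the 2-dimensional subspace `S` and
`B_{S²} = (γ_0², γ_0γ_1, γ_1²)` is linearly independent over `F_q`. -/
theorem stmt_15 {K F : Type*} [Field K] [Fintype K] [Field F] [Algebra K F]
    {n : ℕ} (γ0 γ1 : F) (hind : LinearIndependent K ![γ0, γ1])
    (hindsq : LinearIndependent K ![γ0 * γ0, γ0 * γ1, γ1 * γ1])
    (C : Submodule F (Fin n → F)) :
    (↑(Submodule.span K
        {u : Fin n × Fin 3 → K |
          ∃ v ∈ expSet2 K γ0 γ1 C, ∃ w ∈ expSet2 K γ0 γ1 C, u = twStar2 v w}) :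
        Set (Fin n × Fin 3 → K)) =
      {w : Fin n × Fin 3 → K |
        ∃ d ∈ Submodule.span K
            {d : Fin n → F |
              ∃ a ∈ subspaceSubcode C fun _ => Submodule.span K {γ0, γ1},
                ∃ b ∈ subspaceSubcode C fun _ => Submodule.span K {γ0, γ1},
                  d = fun i => a i * b i},
          ∀ i, d i =
            w (i, 0) • (γ0 * γ0) + w (i, 1) • (γ0 * γ1) + w (i, 2) • (γ1 * γ1)} := by
  classical
  set G : Set (Fin n × Fin 3 → K) :=
    {u | ∃ v ∈ expSet2 K γ0 γ1 C, ∃ w ∈ expSet2 K γ0 γ1 C, u = twStar2 v w} with hG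
  set D : Set (Fin n → F) :=
    {d | ∃ a ∈ subspaceSubcode C fun _ => Submodule.span K {γ0, γ1},
          ∃ b ∈ subspaceSubcode C fun _ => Submodule.span K {γ0, γ1},
            d = fun i => a i * b i} with hD
  have key : phi3 γ0 γ1 '' G = D := by
    apply Set.Subset.antisymm
    · rintro _ ⟨u, ⟨v, ⟨a, haC, haS, hav⟩, w, ⟨b, hbC, hbS, hbw⟩, rfl⟩, rfl⟩
      refine ⟨a, ?_, b, ?_, ?_⟩
      · exact Submodule.mem_inf.mpr ⟨haC, Submodule.mem_pi.mpr fun i _ => haS i⟩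
      · exact Submodule.mem_inf.mpr ⟨hbC, Submodule.mem_pi.mpr fun i _ => hbS i⟩
      · funext i
        rw [← phi3_tw, ← hav i, ← hbw i]
    · rintro _ ⟨a, ha, b, hb, rfl⟩
      obtain ⟨haC, haS⟩ := Submodule.mem_inf.mp ha
      obtain ⟨hbC, hbS⟩ := Submodule.mem_inf.mp hb
      have haS' : ∀ i, a i ∈ Submodule.span K {γ0, γ1} :=
        fun i => Submodule.mem_pi.mp haS i (Set.mem_univ i)
      have hbS' : ∀ i, b i ∈ Submodule.span K {γ0, γ1} :=
        fun i => Submodule.mem_pi.mp hbS i (Set.mem_univ i)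
      choose p q hpq using fun i => Submodule.mem_span_pair.mp (haS' i)
      choose r s hrs using fun i => Submodule.mem_span_pair.mp (hbS' i)
      set v : Fin n × Fin 2 → K := fun x => if x.2 = 0 then p x.1 else q x.1 with hv
      set w : Fin n × Fin 2 → K := fun x => if x.2 = 0 then r x.1 else s x.1 with hw
      refine ⟨twStar2 v w, ⟨v, ⟨a, haC, haS', fun i => ?_⟩, w, ⟨b, hbC, hbS', fun i => ?_⟩, rfl⟩, ?_⟩
      · simp [hv, ← hpq i]
      · simp [hw, ← hrs i]
      · funext i
        rw [← phi3_tw]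
        simp [hv, hw, ← hpq i, ← hrs i]
  have hspan : Submodule.span K D = Submodule.map (phi3 γ0 γ1) (Submodule.span K G) := by
    rw [← key, Submodule.span_image]
  ext u
  simp only [SetLike.mem_coe, Set.mem_setOf_eq]
  have hphi : ∀ d : Fin n → F,
      (∀ i, d i = u (i, 0) • (γ0 * γ0) + u (i, 1) • (γ0 * γ1) + u (i, 2) • (γ1 * γ1))
        ↔ d = phi3 γ0 γ1 u := by
    intro d
    constructor
    · intro h; funext i; exact h i
    · intro h i; rw [h]; rfl
  constructor
  · intro hu
    exact ⟨phi3 γ0 γ1 u, hspan ▸ Submodule.mem_map_of_mem hu, fun i => rfl⟩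
  · rintro ⟨d, hd, hde⟩
    rw [hphi d] at hde
    subst hde
    rw [hspan] at hd
    obtain ⟨x, hx, hxe⟩ := hd
    rwa [← phi3_inj γ0 γ1 hindsq hxe]
end

section
/- Let q be a prime power, m ≥ 1, and λ ≥ 2. Let S ⊆ F_{q^m} be an F_q-subspace of dimension λ with S² = F_{q^m}, and let B_S = (γ_0, …, γ_{λ-1}) be an F_q-basis of S. List the products γ_r γ_s (0 ≤ r ≤ s ≤ λ−1) in the order given by the index C(s+1,2)+r, and let B_{S²} consist of the first m elements of this list; assume B_{S²} is an F_q-basis of F_{q^m}. Let K(λ,m) = {C(λ+1,2)·i + j : 0 ≤ i ≤ n−1, m ≤ j ≤ C(λ+1,2)−1}. Let a, b ∈ S^n and set c = Exp_{B_S}(a) ~⋆ Exp_{B_S}(b) ∈ F_q^{C(λ+1,2)n}. If c_i = 0 for every i ∈ K(λ,m), then the vector obtained from c by deleting the coordinates indexed by K(λ,m) equals Exp_{B_{S²}}(a ⋆ b). -/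
/-!
Expanding `(∑ va_r γ_r) (∑ vb_s γ_s)` and merging the terms `γ_r γ_s` and `γ_s γ_r` gives
`a_i b_i = ∑_{r ≤ s} c_{(r,s)} γ_r γ_s` with `c = va ~⋆ vb`. The vanishing hypothesis kills every
term whose index `C(s+1,2) + r` is at least `m`; since `(r, s) ↦ C(s+1,2) + r` is injective on
`r ≤ s`, the surviving products are distinct vectors of the basis `B_{S²}`, so their
coefficients are the coordinates of `a_i b_i`.
-/

open Module

/-- The index set of the blocks of a twisted product: pairs `(r, s)` with
`0 ≤ r ≤ s ≤ λ - 1`. -/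
abbrev IdxPairs (lam : ℕ) := {p : Fin lam × Fin lam // p.1 ≤ p.2}

/-- The numeric index `C(s+1, 2) + r` of the pair `(r, s)` within a block of a twisted
product. -/
def pairIdx {lam : ℕ} (p : IdxPairs lam) : ℕ :=
  Nat.choose ((p.1.2 : ℕ) + 1) 2 + (p.1.1 : ℕ)

/-- The twisted product of two vectors of `F_q^{λn}` (entries grouped in blocks of
length `λ`): in block `i`, the entry of index `(r, s)` (i.e. `C(s+1,2) + r`) is
`a_{i,r}b_{i,s} + a_{i,s}b_{i,r}` if `r < s` and `a_{i,r}b_{i,r}` if `r = s`. -/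
def twStar {K : Type*} [CommRing K] {n lam : ℕ} (a b : Fin n × Fin lam → K) :
    Fin n × IdxPairs lam → K :=
  fun q =>
    if q.2.1.1 = q.2.1.2 then a (q.1, q.2.1.1) * b (q.1, q.2.1.1)
    else a (q.1, q.2.1.1) * b (q.1, q.2.1.2) + a (q.1, q.2.1.2) * b (q.1, q.2.1.1)

open Finset

theorem pairIdx_injective {lam : ℕ} : Function.Injective (pairIdx (lam := lam)) := by
  -- the indices with second component `s` fill the interval `[C(s+1,2), C(s+2,2))`
  have hlt {r s r' s' : ℕ} (hr : r ≤ s) (hss : s < s') :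
      (s + 1).choose 2 + r < (s' + 1).choose 2 + r' := by
    have hstep : (s + 2).choose 2 = (s + 1).choose 2 + (s + 1) := by
      rw [Nat.choose_succ_succ', Nat.choose_one_right, add_comm]
    have := Nat.choose_le_choose 2 (show s + 2 ≤ s' + 1 by omega)
    omega
  rintro ⟨⟨r, s⟩, hrs⟩ ⟨⟨r', s'⟩, hrs'⟩ h
  simp only [pairIdx] at h
  have hs : s = s' := by
    rcases lt_trichotomy s s' with hss | hss | hss
    · exact absurd h (hlt hrs hss).ne
    · exact hss
    · exact absurd h (hlt hrs' hss).ne'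
  subst hs
  obtain rfl : r = r' := Fin.ext (by omega)
  rfl

theorem sum_prod_eq_sum_idxPairs {M : Type*} [AddCommMonoid M] {lam : ℕ}
    (f : Fin lam × Fin lam → M) :
    ∑ x, f x = ∑ p : IdxPairs lam, if p.1.1 = p.1.2 then f p.1 else f p.1 + f p.1.swap := by
  classical
  have hlower : ∑ x with ¬ x.1 ≤ x.2, f x = ∑ x : Fin lam × Fin lam with x.1 < x.2, f x.swap :=
    sum_nbij' Prod.swap Prod.swap (by simp) (by simp) (by simp) (by simp) (by simp)
  have hsplit (x : Fin lam × Fin lam) : (if x.1 = x.2 then f x else f x + f x.swap) =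
      f x + if x.1 = x.2 then 0 else f x.swap := by
    split_ifs <;> simp
  rw [← sum_filter_add_sum_filter_not univ (fun x => x.1 ≤ x.2), hlower,
    ← sum_subtype _ (fun _ => mem_filter_univ _)
      (fun x => if x.1 = x.2 then f x else f x + f x.swap)]
  simp only [hsplit, sum_add_distrib, sum_ite, sum_const_zero, zero_add, filter_filter]
  congr 2 with x
  simp [lt_iff_le_and_ne]

theorem sum_smul_mul_sum_smul_eq_sum_twStar {K F : Type*} [CommRing K] [CommRing F]
    [Algebra K F] {n lam : ℕ} (va vb : Fin n × Fin lam → K) (γ : Fin lam → F) (i : Fin n) :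
    (∑ j, va (i, j) • γ j) * (∑ j, vb (i, j) • γ j) =
      ∑ p : IdxPairs lam, twStar va vb (i, p) • (γ p.1.1 * γ p.1.2) := by
  rw [sum_mul_sum, ← sum_product', univ_product_univ]
  simp only [smul_mul_smul_comm]
  rw [sum_prod_eq_sum_idxPairs (fun x => (va (i, x.1) * vb (i, x.2)) • (γ x.1 * γ x.2))]
  refine sum_congr rfl fun p _ => ?_
  by_cases hp : p.1.1 = p.1.2
  · simp [twStar, hp]
  · simp [twStar, hp, add_smul, mul_comm (γ p.1.2)]

theorem Module.Basis.repr_sum_smul_comp_apply {ι κ R M : Type*} [Fintype κ] [CommSemiring R]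
    [AddCommMonoid M] [Module R M] (B : Basis ι R M) {e : κ → ι} (he : Function.Injective e)
    (c : κ → R) (k : κ) : B.repr (∑ l, c l • B (e l)) (e k) = c k := by
  classical
  simp [Finsupp.single_apply, he.eq_iff]

theorem stmt_16_general {K F : Type*} [Field K] [Field F] [Algebra K F]
    {m lam n : ℕ}
    (γ : Fin lam → F)
    (Bsq : Basis (Fin m) K F)
    (hBsq : ∀ (p : IdxPairs lam) (h : pairIdx p < m),
      Bsq ⟨pairIdx p, h⟩ = γ p.1.1 * γ p.1.2)
    (a b : Fin n → F)
    (va vb : Fin n × Fin lam → K)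
    (hva : ∀ i, a i = ∑ j, va (i, j) • γ j)
    (hvb : ∀ i, b i = ∑ j, vb (i, j) • γ j)
    (hz : ∀ (i : Fin n) (p : IdxPairs lam), m ≤ pairIdx p → twStar va vb (i, p) = 0) :
    ∀ (i : Fin n) (p : IdxPairs lam) (h : pairIdx p < m),
      twStar va vb (i, p) = Bsq.repr (a i * b i) ⟨pairIdx p, h⟩ := by
  intro i p hp
  let e : {p : IdxPairs lam // pairIdx p < m} → Fin m := fun p => ⟨pairIdx p.1, p.2⟩
  have he : Function.Injective e := fun p p' h =>
    Subtype.ext (pairIdx_injective (congrArg Fin.val h))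
  have hab : a i * b i = ∑ p : {p : IdxPairs lam // pairIdx p < m},
      twStar va vb (i, p.1) • Bsq (e p) := by
    rw [hva, hvb, sum_smul_mul_sum_smul_eq_sum_twStar,
      ← sum_filter_of_ne (p := fun p => pairIdx p < m) ?_,
      sum_subtype _ (fun _ => mem_filter_univ _)]
    · exact sum_congr rfl fun p _ => by rw [hBsq]
    · intro p _ hne
      by_contra hm
      exact hne (by rw [hz i p (not_lt.mp hm), zero_smul])
  rw [hab]
  exact (Bsq.repr_sum_smul_comp_apply he (fun p => twStar va vb (i, p.1)) ⟨p, hp⟩).symm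

/-- let `S ⊆ F_{q^m}` have basis `B_S = (γ_0, …, γ_{λ-1})`, `λ ≥ 2`,
with `S² = F_{q^m}`, and let `B_{S²}` be the basis of `F_{q^m}` made of the first `m`
products `γ_r γ_s` (`r ≤ s`, ordered by `C(s+1,2) + r`).  Let `va, vb` be the
coordinate vectors `Exp_{B_S}(a), Exp_{B_S}(b)` of `a, b ∈ S^n` and set
`c = va ~⋆ vb`.  If `c` vanishes on all coordinates of `K(λ,m)` (those of numeric
index `≥ m` in each block), then deleting those coordinates from `c` yields
`Exp_{B_{S²}}(a ⋆ b)`. -/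
theorem stmt_16 {K F : Type*} [Field K] [Fintype K] [Field F] [Algebra K F]
    {m lam n : ℕ} (hlam : 2 ≤ lam) (hm1 : 1 ≤ m)
    (γ : Fin lam → F) (hγ : LinearIndependent K γ)
    (hSsq : sqSubspace (Submodule.span K (Set.range γ)) = ⊤)
    (Bsq : Basis (Fin m) K F)
    (hBsq : ∀ (p : IdxPairs lam) (h : pairIdx p < m),
      Bsq ⟨pairIdx p, h⟩ = γ p.1.1 * γ p.1.2)
    (a b : Fin n → F)
    (ha : ∀ i, a i ∈ Submodule.span K (Set.range γ))
    (hb : ∀ i, b i ∈ Submodule.span K (Set.range γ))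
    (va vb : Fin n × Fin lam → K)
    (hva : ∀ i, a i = ∑ j, va (i, j) • γ j)
    (hvb : ∀ i, b i = ∑ j, vb (i, j) • γ j)
    (hz : ∀ (i : Fin n) (p : IdxPairs lam), m ≤ pairIdx p → twStar va vb (i, p) = 0) :
    ∀ (i : Fin n) (p : IdxPairs lam) (h : pairIdx p < m),
      twStar va vb (i, p) = Bsq.repr (a i * b i) ⟨pairIdx p, h⟩ :=
  stmt_16_general γ Bsq hBsq a b va vb hva hvb hz
end
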